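/- arXiv:math/0401088 — 2 statements merged into one kernel-verified Lean document; each statement's English description precedes it below -/
import Mathlib

section
/- The matrices U(a,b,c) = [[1, ι₁a, ι₁ι₂b],[−ι₁a, 1, ι₂c],[ι₁ι₂(−b+ac), −ι₂c, 1]] over R[ι₁,ι₂]/(ι₁²,ι₂²) form a group under matrix multiplication, with U(a,b,c)·U(a',b',c') = U(a+a', b+b'+ac', c+c'), and this group is isomorphic to the Heisenberg group over R. -/
open TrivSqZeroExt DualNumber

noncomputable section

variable {R : Type*} [CommRing R]

/-- The contracted Galilei matrix `U(a,b,c)` over `R[ι₁,ι₂]/(ι₁²,ι₂²)`. -/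
def galU (a b c : R) : Matrix (Fin 3) (Fin 3) (DualNumber (DualNumber R)) :=
  let ι₁ : DualNumber (DualNumber R) := TrivSqZeroExt.inl eps
  let ι₂ : DualNumber (DualNumber R) := eps
  let f : R → DualNumber (DualNumber R) :=
    fun r => TrivSqZeroExt.inl (TrivSqZeroExt.inl r)
  !![1, ι₁ * f a, ι₁ * ι₂ * f b;
     -(ι₁ * f a), 1, ι₂ * f c;
     ι₁ * ι₂ * f (-b + a * c), -(ι₂ * f c), 1]

/-- The Heisenberg group element: upper unitriangular `3×3` matrix over `R`. -/
def heisU (a b c : R) : Matrix (Fin 3) (Fin 3) R :=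
  !![1, a, b; 0, 1, c; 0, 0, 1]

set_option maxHeartbeats 4000000 in
private lemma galU_mul (a b c a' b' c' : R) :
    galU a b c * galU a' b' c' = galU (a + a') (b + b' + a * c') (c + c') := by
  ext i j : 1
  fin_cases i <;> fin_cases j <;>
  · simp only [galU, Matrix.mul_apply, Fin.sum_univ_three, Fin.zero_eta, Fin.mk_one,
      Fin.isValue, Matrix.cons_val', Matrix.cons_val_zero,
      Matrix.cons_val_one, Matrix.head_cons, Matrix.empty_val', Matrix.cons_val_fin_one,
      Matrix.head_fin_const, Matrix.cons_val_two, Matrix.tail_cons]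
    ext <;> simp [smul_comm] <;> ring

set_option maxHeartbeats 1000000 in
private lemma galU_zero : galU (0 : R) 0 0 = 1 := by
  ext i j : 1
  fin_cases i <;> fin_cases j <;>
    simp [galU, Matrix.one_apply, Matrix.vecHead, Matrix.vecTail]

/-- The matrices `U(a,b,c)` form a group under matrix multiplication with
`U(a,b,c)·U(a',b',c') = U(a+a', b+b'+ac', c+c')`, isomorphic to the Heisenberg group
of upper unitriangular matrices over `R` (which obeys the same multiplication law,
and `(a,b,c) ↦ U(a,b,c)` is injective). -/
theorem galU_group_heisenberg :
    (∀ a b c a' b' c' : R,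
      galU a b c * galU a' b' c' = galU (a + a') (b + b' + a * c') (c + c')) ∧
    (galU (0 : R) 0 0 = 1) ∧
    (∀ a b c : R, galU a b c * galU (-a) (-b + a * c) (-c) = 1) ∧
    (∀ a b c a' b' c' : R,
      heisU a b c * heisU a' b' c' = heisU (a + a') (b + b' + a * c') (c + c')) ∧
    Function.Injective (fun p : R × R × R => galU p.1 p.2.1 p.2.2) := by
  refine ⟨galU_mul, galU_zero, ?_, ?_, ?_⟩
  · intro a b c
    rw [galU_mul]
    have h1 : a + -a = 0 := by ring
    have h2 : b + (-b + a * c) + a * -c = 0 := by ring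
    have h3 : c + -c = 0 := by ring
    rw [h1, h2, h3, galU_zero]
  · intro a b c a' b' c'
    ext i j : 1
    fin_cases i <;> fin_cases j <;>
      simp [heisU, Matrix.mul_apply, Fin.sum_univ_three, Matrix.vecHead, Matrix.vecTail] <;> ring
  · intro p q h
    obtain ⟨a, b, c⟩ := p
    obtain ⟨a', b', c'⟩ := q
    simp only at h
    have ha : a = a' := by
      have := congrArg (fun M => ((M 0 1).fst).snd) h
      simpa [galU] using this
    have hb : b = b' := by
      have := congrArg (fun M => ((M 0 2).snd).snd) h
      simpa [galU] using this
    have hc : c = c' := by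
      have := congrArg (fun M => ((M 1 2).snd).fst) h
      simpa [galU] using this
    simp [ha, hb, hc]

end
end

section
/- Admissibility of the B-factor: for r ∈ {1,…,n}, K, P ∈ {1,…,N}, N = 2n+1, r' = N+1−r, and J = j_1⋯j_{N−1}, the Laurent monomial B = J·(K,r)·(P,r')/(K,P) has nonnegative exponents in all generators j_1,…,j_{N−1}. -/
/-- Exponent (in `ℤ`) of `j_l` in the multiplier monomial `(k,p)`. -/
def multExpZ (k p l : ℕ) : ℤ := if min k p ≤ l ∧ l < max k p then 1 else 0

/-- Admissibility of the B-factor: for `1 ≤ r ≤ n`, `1 ≤ K, P ≤ N = 2n+1`,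
`r' = N+1−r`, `J = j_1⋯j_{N−1}`, the Laurent monomial `B = J·(K,r)·(P,r')/(K,P)`
has nonnegative exponents in every generator `j_l`. -/
theorem B_factor_nonneg (n r K P : ℕ)
    (hr1 : 1 ≤ r) (hrn : r ≤ n) (hK1 : 1 ≤ K) (hKN : K ≤ 2 * n + 1)
    (hP1 : 1 ≤ P) (hPN : P ≤ 2 * n + 1) (l : ℕ) :
    0 ≤ multExpZ 1 (2 * n + 1) l + multExpZ K r l
        + multExpZ P (2 * n + 1 + 1 - r) l - multExpZ K P l := by
  simp only [multExpZ, Nat.min_def, Nat.max_def]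
  split_ifs <;> omega
end
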